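/- Let M be a compact Riemannian manifold (viewed as a metric space with its Riemannian distance) with diameter at most D, let p ∈ M, and let L, W > 0. Suppose that every closed curve in M of length at most L admits a contraction of width at most W. Then S_p(M, L) ≤ max{2L, 2W + 2D}. -/

import Mathlib

open scoped Manifold Topology
open Set Function ENNReal

/-- The length (total variation) of a curve parametrized on `[0,1]`. -/
noncomputable def loopLen {M : Type*} [PseudoEMetricSpace M] (c : ℝ → M) : ℝ≥0∞ :=
  eVariationOn c (Set.Icc 0 1)

/-- A closed curve in `M`, encoded as a continuous `1`-periodic map `ℝ → M`. -/
def IsLoop {M : Type*} [MetricSpace M] (γ : ℝ → M) : Prop :=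
  Continuous γ ∧ Function.Periodic γ 1

/-- The width of a homotopy `H`, where `H t s` is the position at homotopy-time `s`
of the point of parameter `t`: the supremum over `t ∈ [0,1]` of the length of the
trajectory curve `s ↦ H t s`. -/
noncomputable def homWidth {M : Type*} [PseudoEMetricSpace M] (H : ℝ → ℝ → M) : ℝ≥0∞ :=
  ⨆ t ∈ Set.Icc (0:ℝ) 1, eVariationOn (H t) (Set.Icc 0 1)

/-- A (free) homotopy of closed curves from `γ₁` to `γ₂`. -/
def IsLoopHomotopy {M : Type*} [MetricSpace M] (H : ℝ → ℝ → M) (γ₁ γ₂ : ℝ → M) : Prop :=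
  Continuous (Function.uncurry H) ∧ (∀ s, Function.Periodic (fun t => H t s) 1) ∧
    (∀ t, H t 0 = γ₁ t) ∧ (∀ t, H t 1 = γ₂ t)

/-- A contraction of the closed curve `γ`: a homotopy from `γ` to a constant curve. -/
def IsContraction {M : Type*} [MetricSpace M] (H : ℝ → ℝ → M) (γ : ℝ → M) : Prop :=
  ∃ p : M, IsLoopHomotopy H γ (fun _ => p)

/-- A closed geodesic of length `L` in the metric space `M`: a nonconstant `L`-periodic
curve, parametrized by arclength and locally minimizing. -/
def IsClosedGeodesic {M : Type*} [MetricSpace M] (γ : ℝ → M) (L : ℝ) : Prop :=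
  0 < L ∧ Continuous γ ∧ Function.Periodic γ L ∧ (∃ s t, γ s ≠ γ t) ∧
    ∀ t : ℝ, ∃ ε > 0, ∀ s ∈ Set.Ioo (t - ε) (t + ε), ∀ u ∈ Set.Ioo (t - ε) (t + ε),
      dist (γ s) (γ u) = |s - u|

/-- A good cover of `M` with parameters `(F, G, N)`: open covers `A` (the refinement)
and `B`, each with at most `N` elements. -/
structure GoodCover (M : Type*) [MetricSpace M] (F G : ℝ) (N : ℕ) where
  A : Fin N → Set M
  B : Fin N → Set M
  isOpen_A : ∀ i, IsOpen (A i)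
  isOpen_B : ∀ j, IsOpen (B j)
  cover_A : ⋃ i, A i = Set.univ
  cover_B : ⋃ j, B j = Set.univ
  refines : ∀ i, ∃ j, A i ⊆ B j
  chain_A : ∀ i, ∀ x ∈ A i, ∀ y ∈ A i, ∃ c : ℝ → M,
    ContinuousOn c (Set.Icc 0 1) ∧ c 0 = x ∧ c 1 = y ∧
    Set.MapsTo c (Set.Icc 0 1) (A i) ∧ eVariationOn c (Set.Icc 0 1) ≤ ENNReal.ofReal F
  chain_B : ∀ j, ∀ x ∈ B j, ∀ y ∈ B j, ∃ c : ℝ → M,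
    ContinuousOn c (Set.Icc 0 1) ∧ c 0 = x ∧ c 1 = y ∧
    Set.MapsTo c (Set.Icc 0 1) (B j) ∧ eVariationOn c (Set.Icc 0 1) ≤ ENNReal.ofReal F
  inter_sub : ∀ i i', (A i ∩ A i').Nonempty → ∃ k, A i ∪ A i' ⊆ B k
  contract_B : ∀ j, ∀ γ : ℝ → M, IsLoop γ → (∀ t, γ t ∈ B j) →
    ∃ H : ℝ → ℝ → M, IsContraction H γ ∧ (∀ t, ∀ s ∈ Set.Icc (0:ℝ) 1, H t s ∈ B j) ∧
      homWidth H ≤ ENNReal.ofReal G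

/-- A nerve graph `Σ ⊂ M` associated with a good cover: a choice of vertices `x i ∈ A i`
and, for every pair with `A i ∩ A j ≠ ∅`, an edge curve of length `≤ 2F`
joining `x i` to `x j` inside `A i ∪ A j`. -/
structure NerveGraph {M : Type*} [MetricSpace M] {F G : ℝ} {N : ℕ}
    (GC : GoodCover M F G N) where
  x : Fin N → M
  x_mem : ∀ i, x i ∈ GC.A i
  e : Fin N → Fin N → ℝ → M
  e_symm : ∀ i j s, e j i s = e i j (1 - s)
  e_cont : ∀ i j, (GC.A i ∩ GC.A j).Nonempty → ContinuousOn (e i j) (Set.Icc 0 1)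
  e_src : ∀ i j, (GC.A i ∩ GC.A j).Nonempty → e i j 0 = x i
  e_tgt : ∀ i j, (GC.A i ∩ GC.A j).Nonempty → e i j 1 = x j
  e_mem : ∀ i j, (GC.A i ∩ GC.A j).Nonempty →
    Set.MapsTo (e i j) (Set.Icc 0 1) (GC.A i ∪ GC.A j)
  e_len : ∀ i j, (GC.A i ∩ GC.A j).Nonempty →
    eVariationOn (e i j) (Set.Icc 0 1) ≤ ENNReal.ofReal (2 * F)

/-- `α : [0,1] → M` is a simplicial curve in the nerve graph, of simplicial length `L`:
a concatenation of `L` edge curves, consecutive ones sharing a vertex (for `L = 0`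
it is a constant curve at a vertex). -/
def IsSimplicialCurve {M : Type*} [MetricSpace M] {F G : ℝ} {N : ℕ}
    {GC : GoodCover M F G N} (ng : NerveGraph GC) (α : ℝ → M) (L : ℕ) : Prop :=
  ∃ v : ℕ → Fin N,
    (∀ k < L, (GC.A (v k) ∩ GC.A (v (k+1))).Nonempty) ∧
    (L = 0 → ∀ t ∈ Set.Icc (0:ℝ) 1, α t = ng.x (v 0)) ∧
    (∀ k < L, ∀ s ∈ Set.Icc (0:ℝ) 1, α (((k : ℝ) + s) / L) = ng.e (v k) (v (k+1)) s)

/-- A simplicial loop: a simplicial curve whose initial and final vertices coincide,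
regarded as a `1`-periodic closed curve. -/
def IsSimplicialLoop {M : Type*} [MetricSpace M] {F G : ℝ} {N : ℕ}
    {GC : GoodCover M F G N} (ng : NerveGraph GC) (α : ℝ → M) (L : ℕ) : Prop :=
  Function.Periodic α 1 ∧
  ∃ v : ℕ → Fin N, v L = v 0 ∧
    (∀ k < L, (GC.A (v k) ∩ GC.A (v (k+1))).Nonempty) ∧
    (L = 0 → ∀ t ∈ Set.Icc (0:ℝ) 1, α t = ng.x (v 0)) ∧
    (∀ k < L, ∀ s ∈ Set.Icc (0:ℝ) 1, α (((k : ℝ) + s) / L) = ng.e (v k) (v (k+1)) s)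

/-- A loop based at `p`. -/
def IsBasedLoop {M : Type*} [MetricSpace M] (p : M) (γ : ℝ → M) : Prop :=
  IsLoop γ ∧ γ 0 = p

/-- A based homotopy (through loops based at `p`). -/
def IsBasedHomotopy {M : Type*} [MetricSpace M] (p : M) (H : ℝ → ℝ → M)
    (γ₁ γ₂ : ℝ → M) : Prop :=
  IsLoopHomotopy H γ₁ γ₂ ∧ ∀ s, H 0 s = p

/-- The depth of a loop `γ` based at `p`: the infimum of `S` such that `γ` can be
contracted to the constant loop at `p` through loops of length `≤ length γ + S`. -/
noncomputable def loopDepth {M : Type*} [MetricSpace M] (p : M) (γ : ℝ → M) : ℝ≥0∞ :=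
  ⨅ S ∈ {S : ℝ≥0∞ | ∃ H : ℝ → ℝ → M, IsBasedHomotopy p H γ (fun _ => p) ∧
    ∀ s ∈ Set.Icc (0:ℝ) 1, eVariationOn (fun t => H t s) (Set.Icc 0 1) ≤ loopLen γ + S}, S

/-- `S_p(M, L)`: the supremum of the depths of loops based at `p` of length `≤ L`. -/
noncomputable def depthSup {M : Type*} [MetricSpace M] (p : M) (L : ℝ) : ℝ≥0∞ :=
  ⨆ γ ∈ {γ : ℝ → M | IsBasedLoop p γ ∧ loopLen γ ≤ ENNReal.ofReal L}, loopDepth p γ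

/-!
A free contraction `H` of `γ` of width `W` becomes a based one by dragging the base point along
the trajectory `τ = H(0, ·)`: first deform `γ` into `γ · τ · τ⁻¹`, then, for `c` running from
`1` down to `0`, pass through the loops `γ|[0,c] · H(c, ·) · τ⁻¹` (at `c = 0` this is `τ · τ⁻¹`
up to a constant piece), and finally retract `τ · τ⁻¹`. Every loop on the way has length at
most `length γ + 2W`, so the depth of `γ` is at most `2W`.
-/

noncomputable def concatCurve {α : Type*} (f g : ℝ → α) (t : ℝ) : α :=
  if t ≤ 1 / 2 then f (2 * t) else g (2 * t - 1)

section ConcatCurve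

variable {α : Type*} {f g : ℝ → α}

@[simp]
theorem concatCurve_zero : concatCurve f g 0 = f 0 := by
  simp [concatCurve]

@[simp]
theorem concatCurve_one : concatCurve f g 1 = g 1 := by
  norm_num [concatCurve]

@[simp]
theorem concatCurve_const (a : α) : concatCurve (fun _ => a) (fun _ => a) = fun _ => a := by
  ext t
  simp [concatCurve]

theorem concatCurve_apply {X : Type*} (f g : ℝ → X → α) (s : ℝ) (x : X) :
    concatCurve f g s x = concatCurve (fun s => f s x) (fun s => g s x) s := by
  unfold concatCurve
  split_ifs <;> rfl

theorem mapsTo_concatCurve {S : Set α} (hf : MapsTo f (Icc 0 1) S) (hg : MapsTo g (Icc 0 1) S) :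
    MapsTo (concatCurve f g) (Icc 0 1) S := by
  rintro t ⟨ht₀, ht₁⟩
  unfold concatCurve
  split_ifs with h
  · exact hf ⟨by linarith, by linarith⟩
  · exact hg ⟨by linarith, by linarith⟩

variable [TopologicalSpace α] {X : Type*} [TopologicalSpace X]

theorem continuous_concatCurve_pointwise {f g : X → ℝ → α} (hf : Continuous (uncurry f))
    (hg : Continuous (uncurry g)) (hfg : ∀ x, f x 1 = g x 0) :
    Continuous (uncurry fun x => concatCurve (f x) (g x)) :=
  Continuous.if_le (hf.comp (continuous_fst.prodMk (continuous_const.mul continuous_snd)))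
    (hg.comp (continuous_fst.prodMk ((continuous_const.mul continuous_snd).sub continuous_const)))
    continuous_snd continuous_const fun q hq => by norm_num [hq, hfg]

theorem continuous_uncurry_concatCurve {f g : ℝ → X → α} (hf : Continuous (uncurry f))
    (hg : Continuous (uncurry g)) (hfg : f 1 = g 0) : Continuous (uncurry (concatCurve f g)) := by
  have := continuous_concatCurve_pointwise (f := swap f) (g := swap g) (hf.comp continuous_swap)
    (hg.comp continuous_swap) (congrFun hfg)
  convert this.comp continuous_swap using 1
  ext ⟨s, x⟩
  exact concatCurve_apply f g s x

end ConcatCurve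

section Variation

variable {E : Type*} [PseudoEMetricSpace E] {f g : ℝ → E}

theorem eVariationOn_concatCurve_le (hfg : f 1 = g 0) :
    eVariationOn (concatCurve f g) (Icc 0 1) ≤
      eVariationOn f (Icc 0 1) + eVariationOn g (Icc 0 1) := by
  have hsplit := eVariationOn.Icc_add_Icc (concatCurve f g) (s := univ)
    (by norm_num : (0:ℝ) ≤ 1 / 2) (by norm_num : (1 / 2 : ℝ) ≤ 1) (mem_univ _)
  rw [univ_inter, univ_inter, univ_inter] at hsplit
  rw [← hsplit]
  gcongr
  · have heq : EqOn (concatCurve f g) (f ∘ fun t => 2 * t) (Icc 0 (1 / 2)) := fun t ht => by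
      rw [concatCurve, if_pos ht.2]; rfl
    rw [eVariationOn.eq_of_eqOn heq]
    refine eVariationOn.comp_le_of_monotoneOn f _ (fun x _ y _ hxy => by linarith) ?_
    exact fun t ht => ⟨by linarith [ht.1], by linarith [ht.2]⟩
  · have heq : EqOn (concatCurve f g) (g ∘ fun t => 2 * t - 1) (Icc (1 / 2) 1) := by
      rintro t ⟨ht₀, -⟩
      rcases ht₀.eq_or_lt with rfl | h
      · norm_num [concatCurve, hfg]
      · rw [concatCurve, if_neg h.not_ge]; rfl
    rw [eVariationOn.eq_of_eqOn heq]
    refine eVariationOn.comp_le_of_monotoneOn g _ (fun x _ y _ hxy => by linarith) ?_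
    exact fun t ht => ⟨by linarith [ht.1], by linarith [ht.2]⟩

theorem eVariationOn_comp_mul_le {c : ℝ} (hc : c ∈ Icc (0:ℝ) 1) (f : ℝ → E) :
    eVariationOn (fun t => f (c * t)) (Icc 0 1) ≤ eVariationOn f (Icc 0 1) :=
  eVariationOn.comp_le_of_monotoneOn f (c * ·)
    (fun _ _ _ _ hxy => mul_le_mul_of_nonneg_left hxy hc.1)
    fun _ ht => ⟨mul_nonneg hc.1 ht.1, mul_le_one₀ hc.2 ht.1 ht.2⟩

theorem eVariationOn_comp_one_sub_le (f : ℝ → E) :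
    eVariationOn (fun t => f (1 - t)) (Icc 0 1) ≤ eVariationOn f (Icc 0 1) :=
  eVariationOn.comp_le_of_antitoneOn f (1 - ·) (fun _ _ _ _ hxy => by linarith)
    fun _ ht => ⟨by linarith [ht.2], by linarith [ht.1]⟩

theorem eVariationOn_comp_fract (hf : f 0 = f 1) :
    eVariationOn (fun t => f (Int.fract t)) (Icc 0 1) = eVariationOn f (Icc 0 1) := by
  refine eVariationOn.eq_of_eqOn fun t ht => ?_
  rcases ht.2.lt_or_eq with h | rfl
  · rw [Int.fract_eq_self.2 ⟨ht.1, h⟩]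
  · rw [Int.fract_one, hf]

end Variation

noncomputable def padFamily {α : Type*} (γ : ℝ → α) (c t : ℝ) : α :=
  γ ((1 - c) * t + c * min (2 * t) 1)

noncomputable def backtrackFamily {α : Type*} (x τ : ℝ → α) (c : ℝ) : ℝ → α :=
  concatCurve x (concatCurve (fun t => τ (c * t)) fun t => τ (c * (1 - t)))

noncomputable def slideFamily {α : Type*} (γ : ℝ → α) (H : ℝ → ℝ → α) (c : ℝ) :
    ℝ → α :=
  concatCurve (fun t => γ ((1 - c) * t)) (concatCurve (H (1 - c)) fun t => H 0 (1 - t))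

section Families

variable {α : Type*} {γ x τ : ℝ → α} {H : ℝ → ℝ → α}

theorem padFamily_zero : padFamily γ 0 = γ := by
  ext t
  simp [padFamily]

theorem padFamily_one (h : x 1 = τ 0) : padFamily x 1 = backtrackFamily x τ 0 := by
  ext t
  simp only [padFamily, backtrackFamily, concatCurve, sub_self, zero_mul, zero_add, one_mul]
  split_ifs with ht
  · rw [min_eq_left (by linarith)]
  all_goals rw [min_eq_right (by linarith), h]

theorem backtrackFamily_one (hH : H 1 = H 0) : backtrackFamily γ (H 0) 1 = slideFamily γ H 0 := by
  simp [backtrackFamily, slideFamily, hH]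

theorem slideFamily_one : slideFamily γ H 1 = backtrackFamily (fun _ => γ 0) (H 0) 1 := by
  simp [backtrackFamily, slideFamily]

theorem backtrackFamily_const_zero {a : α} (h : τ 0 = a) :
    backtrackFamily (fun _ => a) τ 0 = fun _ => a := by
  simp [backtrackFamily, h]

end Families

section FamilyContinuity

variable {α : Type*} [TopologicalSpace α] {γ x τ : ℝ → α} {H : ℝ → ℝ → α}

theorem continuous_padFamily (hγ : Continuous γ) : Continuous (uncurry (padFamily γ)) :=
  hγ.comp (by fun_prop)

theorem continuous_backtrackFamily (hx : Continuous x) (hτ : Continuous τ) (h : x 1 = τ 0) :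
    Continuous (uncurry (backtrackFamily x τ)) := by
  refine continuous_concatCurve_pointwise (hx.comp continuous_snd) ?_ fun _ => by simpa using h
  exact continuous_concatCurve_pointwise (hτ.comp (by fun_prop)) (hτ.comp (by fun_prop))
    fun _ => by simp

theorem continuous_slideFamily (hγ : Continuous γ) (hH : Continuous (uncurry H))
    (h₀ : ∀ t, H t 0 = γ t) (h₁ : ∀ t, H t 1 = H 0 1) :
    Continuous (uncurry (slideFamily γ H)) := by
  refine continuous_concatCurve_pointwise (hγ.comp (by fun_prop)) ?_ fun _ => by simp [h₀]
  refine continuous_concatCurve_pointwise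
    (hH.comp (f := fun q : ℝ × ℝ => (1 - q.1, q.2)) (by fun_prop)) ?_ fun _ => by simp [h₁]
  exact hH.comp (f := fun q : ℝ × ℝ => (0, 1 - q.2)) (by fun_prop)

end FamilyContinuity

section FamilyVariation

variable {E : Type*} [PseudoEMetricSpace E] {γ x τ : ℝ → E} {H : ℝ → ℝ → E} {c : ℝ}

theorem eVariationOn_padFamily_le (hc : c ∈ Icc (0:ℝ) 1) :
    eVariationOn (padFamily γ c) (Icc 0 1) ≤ eVariationOn γ (Icc 0 1) := by
  refine eVariationOn.comp_le_of_monotoneOn γ _ (fun u _ v _ huv => ?_) fun t ht => ?_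
  · have : min (2 * u) 1 ≤ min (2 * v) 1 := min_le_min_right _ (by linarith)
    nlinarith [hc.1, hc.2]
  · have h₀ : 0 ≤ min (2 * t) 1 := le_min (by linarith [ht.1]) zero_le_one
    have h₁ : min (2 * t) 1 ≤ 1 := min_le_right _ _
    constructor <;> nlinarith [hc.1, hc.2, ht.1, ht.2]

theorem eVariationOn_backtrackFamily_le (hc : c ∈ Icc (0:ℝ) 1) (h : x 1 = τ 0) :
    eVariationOn (backtrackFamily x τ c) (Icc 0 1) ≤
      eVariationOn x (Icc 0 1) + 2 * eVariationOn τ (Icc 0 1) := by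
  have hτ := eVariationOn_comp_mul_le hc τ
  calc eVariationOn (backtrackFamily x τ c) (Icc 0 1)
      ≤ eVariationOn x (Icc 0 1) + (eVariationOn (fun t => τ (c * t)) (Icc 0 1) +
          eVariationOn (fun t => τ (c * (1 - t))) (Icc 0 1)) := by
        refine (eVariationOn_concatCurve_le (by simpa using h)).trans (add_le_add le_rfl ?_)
        exact eVariationOn_concatCurve_le (by simp)
    _ ≤ eVariationOn x (Icc 0 1) + (eVariationOn τ (Icc 0 1) + eVariationOn τ (Icc 0 1)) := by
        gcongr
        exact (eVariationOn_comp_one_sub_le fun t => τ (c * t)).trans hτ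
    _ = eVariationOn x (Icc 0 1) + 2 * eVariationOn τ (Icc 0 1) := by rw [two_mul]

theorem eVariationOn_slideFamily_le (hc : c ∈ Icc (0:ℝ) 1) (h₀ : ∀ t, H t 0 = γ t)
    (h₁ : ∀ t, H t 1 = H 0 1) :
    eVariationOn (slideFamily γ H c) (Icc 0 1) ≤ eVariationOn γ (Icc 0 1) +
      (eVariationOn (H (1 - c)) (Icc 0 1) + eVariationOn (H 0) (Icc 0 1)) := by
  have hc' : 1 - c ∈ Icc (0:ℝ) 1 := ⟨sub_nonneg.2 hc.2, sub_le_self _ hc.1⟩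
  refine (eVariationOn_concatCurve_le (by simp [h₀])).trans (add_le_add ?_ ?_)
  · exact eVariationOn_comp_mul_le hc' γ
  · refine (eVariationOn_concatCurve_le (by simp [h₁])).trans (add_le_add le_rfl ?_)
    exact eVariationOn_comp_one_sub_le (H 0)

end FamilyVariation

noncomputable def contractionStages {α : Type*} (γ : ℝ → α) (H : ℝ → ℝ → α) :
    ℝ → ℝ → α :=
  concatCurve (concatCurve (padFamily γ) (backtrackFamily γ (H 0)))
    (concatCurve (slideFamily γ H) fun c => backtrackFamily (fun _ => γ 0) (H 0) (1 - c))

theorem eVariationOn_le_homWidth {E : Type*} [PseudoEMetricSpace E] {H : ℝ → ℝ → E}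
    {t : ℝ} (ht : t ∈ Icc (0:ℝ) 1) : eVariationOn (H t) (Icc 0 1) ≤ homWidth H :=
  le_iSup₂ (f := fun t (_ : t ∈ Icc (0:ℝ) 1) => eVariationOn (H t) (Icc 0 1)) t ht

section Stages

variable {M : Type*} {q : M} {γ : ℝ → M} {H : ℝ → ℝ → M}

theorem contractionStages_zero : contractionStages γ H 0 = γ := by
  simp [contractionStages, padFamily_zero]

theorem contractionStages_one (hH : H 0 0 = γ 0) : contractionStages γ H 1 = fun _ => γ 0 := by
  simp [contractionStages, backtrackFamily_const_zero hH]

theorem contractionStages_apply_zero (s : ℝ) : contractionStages γ H s 0 = γ 0 := by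
  simp [contractionStages, concatCurve_apply, padFamily, backtrackFamily, slideFamily]

theorem contractionStages_apply_one (hγ : γ 1 = γ 0) (hH : H 0 0 = γ 0) (s : ℝ) :
    contractionStages γ H s 1 = γ 0 := by
  simp [contractionStages, concatCurve_apply, padFamily, backtrackFamily, slideFamily, hγ, hH]

variable [MetricSpace M]

theorem continuous_contractionStages (hγ : IsLoop γ) (hH : IsLoopHomotopy H γ fun _ => q) :
    Continuous (uncurry (contractionStages γ H)) := by
  obtain ⟨hγc, hγper⟩ := hγ
  obtain ⟨hHc, hHper, hH₀, hH₁⟩ := hH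
  have hγ₁ : γ 1 = H 0 0 := by simpa [hH₀] using hγper 0
  have hHH : ∀ t, H t 1 = H 0 1 := fun t => (hH₁ t).trans (hH₁ 0).symm
  have hτ : Continuous (H 0) := hHc.comp (f := fun t => (0, t)) (by fun_prop)
  have hback : Continuous (uncurry (backtrackFamily (fun _ => γ 0) (H 0))) :=
    continuous_backtrackFamily continuous_const hτ (hH₀ 0).symm
  refine continuous_uncurry_concatCurve (continuous_uncurry_concatCurve ?_ ?_ ?_)
    (continuous_uncurry_concatCurve ?_ ?_ ?_) ?_
  · exact continuous_padFamily hγc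
  · exact continuous_backtrackFamily hγc hτ hγ₁
  · exact padFamily_one hγ₁
  · exact continuous_slideFamily hγc hHc hH₀ hHH
  · exact hback.comp (f := fun q : ℝ × ℝ => (1 - q.1, q.2)) (by fun_prop)
  · simpa using slideFamily_one
  · simpa using backtrackFamily_one (funext fun s => by simpa using hHper s 0)

theorem eVariationOn_contractionStages_le (hγ : γ 1 = γ 0) (hH₀ : ∀ t, H t 0 = γ t)
    (hH₁ : ∀ t, H t 1 = q) {s : ℝ} (hs : s ∈ Icc (0:ℝ) 1) :
    eVariationOn (contractionStages γ H s) (Icc 0 1) ≤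
      eVariationOn γ (Icc 0 1) + 2 * homWidth H := by
  have hHH : ∀ t, H t 1 = H 0 1 := fun t => (hH₁ t).trans (hH₁ 0).symm
  have hτ : eVariationOn (H 0) (Icc 0 1) ≤ homWidth H := eVariationOn_le_homWidth (by simp)
  refine mapsTo_concatCurve (S := {φ | eVariationOn φ (Icc 0 1) ≤ _})
    (mapsTo_concatCurve ?_ ?_) (mapsTo_concatCurve ?_ ?_) hs
  all_goals intro c hc
  · exact (eVariationOn_padFamily_le hc).trans le_self_add
  · refine (eVariationOn_backtrackFamily_le hc (by simp [hH₀, hγ])).trans ?_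
    gcongr
  · have hc' : 1 - c ∈ Icc (0:ℝ) 1 := ⟨sub_nonneg.2 hc.2, sub_le_self _ hc.1⟩
    refine (eVariationOn_slideFamily_le hc hH₀ hHH).trans ?_
    rw [two_mul]
    gcongr
    exact eVariationOn_le_homWidth hc'
  · have hc' : 1 - c ∈ Icc (0:ℝ) 1 := ⟨sub_nonneg.2 hc.2, sub_le_self _ hc.1⟩
    refine (eVariationOn_backtrackFamily_le hc' (by simp [hH₀])).trans ?_
    rw [eVariationOn.constant_on (by simp), zero_add]
    exact le_add_self.trans (by gcongr)

end Stages

noncomputable def basedContraction {α : Type*} (γ : ℝ → α) (H : ℝ → ℝ → α) (t s : ℝ) : α :=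
  contractionStages γ H s (Int.fract t)

section BasedContraction

variable {M : Type*} [MetricSpace M] {p q : M} {γ : ℝ → M} {H : ℝ → ℝ → M}

theorem isBasedHomotopy_basedContraction (hγ : IsBasedLoop p γ)
    (hH : IsLoopHomotopy H γ fun _ => q) :
    IsBasedHomotopy p (basedContraction γ H) γ fun _ => p := by
  obtain ⟨⟨hγc, hγper⟩, rfl⟩ := hγ
  have hγ₁ : γ 1 = γ 0 := by simpa using hγper 0
  have hH₀₀ : H 0 0 = γ 0 := hH.2.2.1 0
  have hends : ∀ s, contractionStages γ H s 0 = contractionStages γ H s 1 := fun s => by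
    rw [contractionStages_apply_zero, contractionStages_apply_one hγ₁ hH₀₀]
  refine ⟨⟨?_, fun s t => by simp [basedContraction], fun t => ?_, fun t => ?_⟩,
    fun s => ?_⟩
  · exact (((continuous_contractionStages ⟨hγc, hγper⟩ hH).continuousOn).comp_fract'
      hends).comp continuous_swap
  · rw [basedContraction, contractionStages_zero, Int.fract]
    simpa only [mul_one] using hγper.sub_int_mul_eq ⌊t⌋
  · simp [basedContraction, contractionStages_one hH₀₀]
  · simp [basedContraction, contractionStages_apply_zero]

theorem loopDepth_le_two_mul_homWidth (hγ : IsBasedLoop p γ) (hH : IsContraction H γ) :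
    loopDepth p γ ≤ 2 * homWidth H := by
  obtain ⟨q, hH⟩ := hH
  have hγ₁ : γ 1 = γ 0 := by simpa using hγ.1.2 0
  obtain ⟨-, -, hH₀, hH₁⟩ := id hH
  refine iInf₂_le _ ⟨basedContraction γ H, isBasedHomotopy_basedContraction hγ hH,
    fun s hs => ?_⟩
  show eVariationOn (fun t => contractionStages γ H s (Int.fract t)) (Icc 0 1) ≤ _
  rw [eVariationOn_comp_fract (by rw [contractionStages_apply_zero,
    contractionStages_apply_one hγ₁ (hH₀ 0)])]
  exact eVariationOn_contractionStages_le hγ₁ hH₀ hH₁ hs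

end BasedContraction

theorem depth_bound_of_contraction_width_general
    (M : Type) [MetricSpace M]
    (D : ℝ) (hD : Metric.diam (Set.univ : Set M) ≤ D)
    (p : M) (L W : ℝ)
    (hcon : ∀ γ : ℝ → M, IsLoop γ → loopLen γ ≤ ENNReal.ofReal L →
      ∃ H : ℝ → ℝ → M, IsContraction H γ ∧ homWidth H ≤ ENNReal.ofReal W) :
    depthSup p L ≤ ENNReal.ofReal (max (2 * L) (2 * W + 2 * D)) := by
  have hD₀ : 0 ≤ D := Metric.diam_nonneg.trans hD
  refine iSup₂_le fun γ ⟨hγ, hlen⟩ => ?_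
  obtain ⟨H, hH, hwidth⟩ := hcon γ hγ.1 hlen
  calc loopDepth p γ ≤ 2 * homWidth H := loopDepth_le_two_mul_homWidth hγ hH
    _ ≤ 2 * ENNReal.ofReal W := by gcongr
    _ = ENNReal.ofReal (2 * W) := by rw [ENNReal.ofReal_mul zero_le_two, ENNReal.ofReal_ofNat]
    _ ≤ ENNReal.ofReal (max (2 * L) (2 * W + 2 * D)) :=
        ENNReal.ofReal_le_ofReal (le_max_of_le_right (by linarith))

/-- If `M` is a compact Riemannian manifold of diameter `≤ D` and every
closed curve of length `≤ L` admits a contraction of width `≤ W`, then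
`S_p(M, L) ≤ max {2L, 2W + 2D}`. -/
theorem depth_bound_of_contraction_width
    (n : ℕ) (M : Type) [MetricSpace M] [CompactSpace M] [Nonempty M]
    [ChartedSpace (EuclideanSpace ℝ (Fin n)) M] [IsManifold (𝓡 n) (⊤ : ℕ∞) M]
    (D : ℝ) (hD : Metric.diam (Set.univ : Set M) ≤ D)
    (p : M) (L W : ℝ) (hL : 0 < L) (hW : 0 < W)
    (hcon : ∀ γ : ℝ → M, IsLoop γ → loopLen γ ≤ ENNReal.ofReal L →
      ∃ H : ℝ → ℝ → M, IsContraction H γ ∧ homWidth H ≤ ENNReal.ofReal W) :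
    depthSup p L ≤ ENNReal.ofReal (max (2 * L) (2 * W + 2 * D)) :=
  depth_bound_of_contraction_width_general M D hD p L W hcon
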